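/- Let 1/2 ≤ H < 1 and define ψ₁(k) = (1/H)·(k^{2H} − (k−1)^{2H}) − (2/(2H+1))·((k+1)^{2H+1} − 2k^{2H+1} + (k−1)^{2H+1}). Then ψ₁(k) / (2(1−2H)·k^{2H−1}) → 1 as k → ∞ when H ≠ 1/2, and ψ₁(k)·k^{1−2H} → 2(1−2H) as k → ∞ in general. -/

import Mathlib

/-!
With `x = 1/k`, `ψ₁(k) k^{1-2H} = (1/H) (1 - (1-x)^{2H}) / x
- (2/(2H+1)) ((1+x)^{2H+1} - 2 + (1-x)^{2H+1}) / x²`.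
The first quotient is a difference quotient of `(1-x)^{2H}` at `0` and tends to `2H`; the second
is a second symmetric difference quotient of `(1+x)^{2H+1}`, which tends to `(2H+1) 2H` by
L'Hôpital's rule. The limit is therefore `2 - 4H = 2(1-2H)`, and dividing by this constant when it
is nonzero gives the first claim.
-/

open Filter

noncomputable section

/-- `ψ₁(k) = (1/H)(k^{2H} − (k−1)^{2H}) − (2/(2H+1))((k+1)^{2H+1} − 2k^{2H+1} + (k−1)^{2H+1})`. -/
def psi1 (H : ℝ) (k : ℕ) : ℝ :=
  (1/H) * ((k:ℝ) ^ (2*H) - ((k:ℝ) - 1) ^ (2*H))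
    - (2/(2*H+1)) * (((k:ℝ) + 1) ^ (2*H+1) - 2 * (k:ℝ) ^ (2*H+1) + ((k:ℝ) - 1) ^ (2*H+1))

open Topology

lemma hasDerivAt_one_add_rpow (q : ℝ) {x : ℝ} (hx : 1 + x ≠ 0) :
    HasDerivAt (fun y : ℝ => (1 + y) ^ q) (q * (1 + x) ^ (q - 1)) x := by
  simpa using ((hasDerivAt_id x).const_add 1).rpow_const (p := q) (Or.inl hx)

lemma hasDerivAt_one_sub_rpow (q : ℝ) {x : ℝ} (hx : 1 - x ≠ 0) :
    HasDerivAt (fun y : ℝ => (1 - y) ^ q) (-(q * (1 - x) ^ (q - 1))) x := by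
  simpa using ((hasDerivAt_id x).const_sub 1).rpow_const (p := q) (Or.inl hx)

lemma tendsto_one_sub_one_sub_rpow_div (p : ℝ) :
    Tendsto (fun x : ℝ => (1 - (1 - x) ^ p) / x) (𝓝[>] 0) (𝓝 p) := by
  have h := (hasDerivAt_one_sub_rpow p (x := 0) (by norm_num)).tendsto_slope_zero_right.neg
  simp only [zero_add, sub_zero, Real.one_rpow, mul_one, neg_neg, smul_eq_mul] at h
  refine h.congr fun x => ?_
  rw [div_eq_inv_mul, ← neg_sub, mul_neg, neg_neg]

lemma tendsto_one_add_rpow_sub_one_sub_rpow_div (q : ℝ) :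
    Tendsto (fun x : ℝ => ((1 + x) ^ q - (1 - x) ^ q) / x) (𝓝[>] 0) (𝓝 (2 * q)) := by
  have hd : HasDerivAt (fun y : ℝ => (1 + y) ^ q - (1 - y) ^ q) (2 * q) 0 := by
    simpa [two_mul] using (hasDerivAt_one_add_rpow q (x := 0) (by norm_num)).fun_sub
      (hasDerivAt_one_sub_rpow q (x := 0) (by norm_num))
  have h := hd.tendsto_slope_zero_right
  simp only [zero_add, add_zero, sub_zero, Real.one_rpow, sub_self, smul_eq_mul] at h
  exact h.congr fun x => div_eq_inv_mul _ _ |>.symm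

lemma tendsto_one_add_rpow_sub_two_add_one_sub_rpow_div_sq (a : ℝ) :
    Tendsto (fun x : ℝ => ((1 + x) ^ a - 2 + (1 - x) ^ a) / x ^ 2) (𝓝[>] 0)
      (𝓝 (a * (a - 1))) := by
  have hderiv : ∀ x ∈ Set.Ioo (0 : ℝ) 1, HasDerivAt (fun y : ℝ => (1 + y) ^ a - 2 + (1 - y) ^ a)
      (a * ((1 + x) ^ (a - 1) - (1 - x) ^ (a - 1))) x := by
    rintro x ⟨hx0, hx1⟩
    have := ((hasDerivAt_one_add_rpow a (by linarith : 1 + x ≠ 0)).sub_const 2).fun_add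
      (hasDerivAt_one_sub_rpow a (by linarith : 1 - x ≠ 0))
    exact this.congr_deriv (by ring)
  have hnum : Tendsto (fun y : ℝ => (1 + y) ^ a - 2 + (1 - y) ^ a) (𝓝[>] 0) (𝓝 0) := by
    have hc : ContinuousAt (fun y : ℝ => (1 + y) ^ a - 2 + (1 - y) ^ a) 0 := by
      fun_prop (disch := norm_num)
    convert hc.tendsto.mono_left nhdsWithin_le_nhds using 2
    norm_num
  have hden : Tendsto (fun y : ℝ => y ^ 2) (𝓝[>] 0) (𝓝 0) := by
    simpa using ((continuous_pow 2).tendsto (0 : ℝ)).mono_left nhdsWithin_le_nhds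
  -- after cancelling the factor `2`, the ratio of derivatives is the symmetric difference quotient
  have hratio : Tendsto (fun x : ℝ => a * ((1 + x) ^ (a - 1) - (1 - x) ^ (a - 1)) / (2 * x))
      (𝓝[>] 0) (𝓝 (a * (a - 1))) := by
    have h := (tendsto_one_add_rpow_sub_one_sub_rpow_div (a - 1)).const_mul (a / 2)
    rw [show a / 2 * (2 * (a - 1)) = a * (a - 1) by ring] at h
    refine h.congr' ?_
    filter_upwards [self_mem_nhdsWithin] with x hx
    field_simp [(Set.mem_Ioi.mp hx).ne']
  exact HasDerivAt.lhopital_zero_right_on_Ioo one_pos hderiv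
    (fun x _ => by simpa [mul_comm] using hasDerivAt_pow 2 x)
    (fun x hx => mul_ne_zero two_ne_zero hx.1.ne') hnum hden hratio

def psi1Rescaled (H x : ℝ) : ℝ :=
  (1 / H) * ((1 - (1 - x) ^ (2 * H)) / x)
    - (2 / (2 * H + 1)) * (((1 + x) ^ (2 * H + 1) - 2 + (1 - x) ^ (2 * H + 1)) / x ^ 2)

lemma tendsto_psi1Rescaled {H : ℝ} (hH : H ≠ 0) (hH' : 2 * H + 1 ≠ 0) :
    Tendsto (psi1Rescaled H) (𝓝[>] 0) (𝓝 (2 * (1 - 2 * H))) := by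
  have h := ((tendsto_one_sub_one_sub_rpow_div (2 * H)).const_mul (1 / H)).sub
    ((tendsto_one_add_rpow_sub_two_add_one_sub_rpow_div_sq (2 * H + 1)).const_mul (2 / (2 * H + 1)))
  rwa [show 1 / H * (2 * H) - 2 / (2 * H + 1) * ((2 * H + 1) * (2 * H + 1 - 1)) = 2 * (1 - 2 * H)
    by rw [div_mul_eq_mul_div, div_mul_eq_mul_div, div_sub_div _ _ hH hH',
      div_eq_iff (mul_ne_zero hH hH')]; ring] at h

lemma psi1_mul_rpow_eq_psi1Rescaled (H : ℝ) {k : ℕ} (hk : k ≠ 0) :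
    psi1 H k * (k : ℝ) ^ (1 - 2 * H) = psi1Rescaled H (k : ℝ)⁻¹ := by
  have hk0 : (0 : ℝ) < k := by positivity
  have hsub : (0 : ℝ) ≤ 1 - (k : ℝ)⁻¹ :=
    sub_nonneg.mpr (inv_le_one_of_one_le₀ (by exact_mod_cast Nat.one_le_iff_ne_zero.mpr hk))
  have hk_sub : (k : ℝ) - 1 = k * (1 - (k : ℝ)⁻¹) := by field_simp
  have hk_add : (k : ℝ) + 1 = k * (1 + (k : ℝ)⁻¹) := by field_simp
  have hA : (k : ℝ) ^ (2 * H) * (k : ℝ) ^ (1 - 2 * H) = k := by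
    rw [← Real.rpow_add hk0, show 2 * H + (1 - 2 * H) = 1 by ring, Real.rpow_one]
  have hB : (k : ℝ) ^ (2 * H + 1) * (k : ℝ) ^ (1 - 2 * H) = (k : ℝ) ^ 2 := by
    rw [← Real.rpow_add hk0, show 2 * H + 1 + (1 - 2 * H) = (2 : ℝ) by ring, Real.rpow_two]
  rw [psi1, psi1Rescaled, hk_sub, hk_add, Real.mul_rpow hk0.le hsub,
    Real.mul_rpow hk0.le (by positivity), Real.mul_rpow hk0.le hsub, inv_pow, div_inv_eq_mul,
    div_inv_eq_mul]
  linear_combination (1 / H * (1 - (1 - (k : ℝ)⁻¹) ^ (2 * H))) * hA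
    - 2 / (2 * H + 1) * ((1 + (k : ℝ)⁻¹) ^ (2 * H + 1) - 2 + (1 - (k : ℝ)⁻¹) ^ (2 * H + 1)) * hB

theorem psi1_asymptotics_general (H : ℝ) (h1 : 1/2 ≤ H) :
    (H ≠ 1/2 →
      Tendsto (fun k : ℕ => psi1 H k / (2 * (1 - 2*H) * (k:ℝ) ^ (2*H - 1)))
        atTop (nhds 1))
    ∧ Tendsto (fun k : ℕ => psi1 H k * (k:ℝ) ^ (1 - 2*H)) atTop (nhds (2 * (1 - 2*H))) := by
  have hinv : Tendsto (fun k : ℕ => (k : ℝ)⁻¹) atTop (𝓝[>] 0) :=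
    tendsto_inv_atTop_nhdsGT_zero.comp tendsto_natCast_atTop_atTop
  have hrescaled : Tendsto (fun k : ℕ => psi1 H k * (k : ℝ) ^ (1 - 2 * H)) atTop
      (𝓝 (2 * (1 - 2 * H))) := by
    refine ((tendsto_psi1Rescaled (by linarith) (by linarith)).comp hinv).congr' ?_
    filter_upwards [eventually_ne_atTop 0] with k hk
    exact (psi1_mul_rpow_eq_psi1Rescaled H hk).symm
  refine ⟨fun hH => ?_, hrescaled⟩
  have hc : 2 * (1 - 2 * H) ≠ 0 := by contrapose! hH; linarith
  refine (div_self hc ▸ hrescaled.div_const (2 * (1 - 2 * H))).congr' ?_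
  filter_upwards [eventually_ne_atTop 0] with k hk
  have hk0 : (0 : ℝ) < k := by positivity
  have hpow : (k : ℝ) ^ (2 * H - 1) ≠ 0 := (Real.rpow_pos_of_pos hk0 _).ne'
  rw [show 1 - 2 * H = -(2 * H - 1) by ring, Real.rpow_neg hk0.le]
  field_simp

/-- for `1/2 ≤ H < 1`, `ψ₁(k)/(2(1−2H)k^{2H−1}) → 1` as `k → ∞` when `H ≠ 1/2`,
and `ψ₁(k) · k^{1−2H} → 2(1−2H)` in general. -/
theorem psi1_asymptotics (H : ℝ) (h1 : 1/2 ≤ H) (h2 : H < 1) :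
    (H ≠ 1/2 →
      Tendsto (fun k : ℕ => psi1 H k / (2 * (1 - 2*H) * (k:ℝ) ^ (2*H - 1)))
        atTop (nhds 1))
    ∧ Tendsto (fun k : ℕ => psi1 H k * (k:ℝ) ^ (1 - 2*H)) atTop (nhds (2 * (1 - 2*H))) :=
  psi1_asymptotics_general H h1

end
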